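/- arXiv:2604.14323 — 3 statements merged into one kernel-verified Lean document; each statement's English description precedes it below -/
import Mathlib

section
/- Fix integers m ≥ 1 and n ≥ 0. Then Σ_{k=0}^{n} [ Σ_{j=0}^{k} (−1)^j C(k,j) (n−k+1)_j (m+k−1)_{k−j} ] / (m+n)_k = Σ_{j=0}^{n} (−2)^j · C(n+j+1, 2j+1) / C(n+m−1+j, j). -/
/-!
Write `(-1)^j (b)_j = j! C(-b, j)` and `(y)_p = p! C(y+p-1, p)` with generalized binomial
coefficients. Expanding `2^i = ∑_l C(i, l)` and applying Chu–Vandermonde gives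
`∑_j C(a, j) C(x-j, k-j) = ∑_i 2^i C(a, i) C(x-a, k-i)`, which turns the `k`-th summand into
`∑_i (-2)^i C(k, i) C(n-k+i, i) / C(n+m-1+i, i)`. After exchanging the two sums, the upper
Chu–Vandermonde identity `∑_k C(k, i) C(n-k+i, i) = C(n+i+1, 2i+1)` finishes the proof.
-/

open Finset Nat

noncomputable def poch (x : ℝ) (p : ℕ) : ℝ := ∏ i ∈ Finset.range p, (x + i)

namespace Nat

theorem sum_range_choose_mul_choose_sub (p q s : ℕ) :
    ∑ k ∈ range (s + 1), k.choose p * (s - k).choose q = (s + 1).choose (p + q + 1) := by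
  induction s generalizing q with
  | zero => cases p <;> cases q <;> simp [choose_eq_zero_of_lt]
  | succ s ih =>
    rw [sum_range_succ, Nat.sub_self]
    cases q with
    | zero =>
      have hockey := ih 0
      simp only [choose_zero_right, mul_one] at hockey ⊢
      rw [hockey, choose_succ_succ' (s + 1), add_comm]
    | succ q =>
      have pascal (k : ℕ) (hk : k ∈ range (s + 1)) :
          k.choose p * (s + 1 - k).choose (q + 1) =
            k.choose p * (s - k).choose q + k.choose p * (s - k).choose (q + 1) := by
        rw [show s + 1 - k = s - k + 1 by have := mem_range.mp hk; omega, choose_succ_succ',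
          mul_add]
      rw [sum_congr rfl pascal, sum_add_distrib, ih, ih, choose_zero_succ, mul_zero, add_zero,
        show p + (q + 1) + 1 = p + q + 1 + 1 by ring, choose_succ_succ' (s + 1)]

theorem sum_range_choose_mul_choose_sub_add (n i : ℕ) :
    ∑ k ∈ range (n + 1), k.choose i * (n - k + i).choose i =
      (n + i + 1).choose (2 * i + 1) := by
  rw [two_mul, ← sum_range_choose_mul_choose_sub, show n + i + 1 = n + 1 + i by ring,
    sum_range_add _ (n + 1) i, sum_eq_zero (s := range i) fun t ht => by
      rw [choose_eq_zero_of_lt (n := n + i - (n + 1 + t)) (by have := mem_range.mp ht; omega),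
        mul_zero], add_zero]
  refine sum_congr rfl fun k hk => ?_
  rw [show n - k + i = n + i - k by have := mem_range.mp hk; omega]

end Nat

namespace Ring
variable {R : Type*} [CommRing R] [BinomialRing R]

theorem sum_range_choose_mul_choose_mul_choose (a x : R) {k l : ℕ} (hl : l ≤ k) :
    ∑ i ∈ range (k + 1), (i.choose l : R) * choose a i * choose (x - a) (k - i) =
      choose a l * choose (x - l) (k - l) := by
  obtain ⟨t, rfl⟩ := Nat.exists_eq_add_of_le hl
  rw [show l + t + 1 = l + (t + 1) by omega, sum_range_add, sum_eq_zero fun i hi => by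
    rw [Nat.choose_eq_zero_of_lt (mem_range.mp hi)]; simp]
  rw [zero_add, Nat.add_sub_cancel_left, show x - l = (a - l) + (x - a) by abel,
    add_choose_eq _ (Commute.all _ _), Nat.sum_antidiagonal_eq_sum_range_succ_mk, mul_sum]
  refine sum_congr rfl fun i hi => ?_
  rw [← nsmul_eq_mul, choose_smul_choose a (Nat.le_add_right l i), Nat.add_sub_cancel_left,
    show l + t - (l + i) = t - i by omega, mul_assoc]

theorem sum_choose_mul_choose_sub_eq_sum_two_pow (a x : R) (k : ℕ) :
    ∑ j ∈ range (k + 1), choose a j * choose (x - j) (k - j) =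
      ∑ i ∈ range (k + 1), 2 ^ i * choose a i * choose (x - a) (k - i) := by
  have two_pow (i : ℕ) (hi : i ∈ range (k + 1)) :
      (2 : R) ^ i = ∑ l ∈ range (k + 1), (i.choose l : R) := by
    rw [← sum_range_add_sum_Ico _ (mem_range.mp hi : i + 1 ≤ k + 1),
      sum_eq_zero (s := Ico _ _) fun l hl => by
        rw [Nat.choose_eq_zero_of_lt (mem_Ico.mp hl).1, Nat.cast_zero]]
    rw [add_zero, ← Nat.cast_sum, Nat.sum_range_choose, Nat.cast_pow, Nat.cast_ofNat]
  simp_rw +contextual [two_pow, sum_mul]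
  rw [sum_comm]
  exact sum_congr rfl fun l hl =>
    (sum_range_choose_mul_choose_mul_choose a x (Nat.lt_succ_iff.mp (mem_range.mp hl))).symm

end Ring

theorem poch_eq_ascPochhammer_eval (x : ℝ) (p : ℕ) :
    poch x p = (ascPochhammer ℝ p).eval x := by
  induction p with
  | zero => simp [poch]
  | succ p ih => simp [poch, prod_range_succ, ascPochhammer_succ_right, ← ih]

theorem poch_eq_factorial_mul_multichoose (x : ℝ) (p : ℕ) :
    poch x p = p ! * Ring.multichoose x p := by
  rw [poch_eq_ascPochhammer_eval, ← Polynomial.ascPochhammer_smeval_eq_eval,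
    ← Ring.factorial_nsmul_multichoose_eq_ascPochhammer, nsmul_eq_mul]

theorem poch_eq_factorial_mul_choose (x : ℝ) (p : ℕ) :
    poch x p = p ! * Ring.choose (x + p - 1) p := by
  rw [poch_eq_factorial_mul_multichoose, Ring.multichoose_eq]

theorem neg_one_pow_mul_poch (x : ℝ) (p : ℕ) :
    (-1) ^ p * poch x p = p ! * Ring.choose (-x) p := by
  rw [Ring.choose_neg', poch_eq_factorial_mul_multichoose, Units.smul_def, zsmul_eq_mul,
    Int.cast_negOnePow_natCast]
  ring

theorem poch_add (x : ℝ) (a b : ℕ) : poch x (a + b) = poch x a * poch (x + a) b := by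
  simp only [poch, prod_range_add, Nat.cast_add, add_assoc]

theorem poch_natCast_add_one (a p : ℕ) : poch (a + 1) p = p ! * (a + p).choose p := by
  rw [poch_eq_factorial_mul_choose, show (a + 1 + p - 1 : ℝ) = (a + p : ℕ) by push_cast; ring,
    Ring.choose_natCast]

theorem poch_pos {x : ℝ} (hx : 0 < x) (p : ℕ) : 0 < poch x p :=
  prod_pos fun i _ => by positivity

theorem sum_neg_one_pow_mul_poch_mul_poch (b y : ℝ) (k : ℕ) :
    ∑ j ∈ range (k + 1), (-1) ^ j * k.choose j * poch b j * poch y (k - j) =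
      ∑ i ∈ range (k + 1), (-2) ^ i * k.choose i * poch b i * poch (y + b + i) (k - i) := by
  have key := congrArg ((k ! : ℝ) * ·)
    (Ring.sum_choose_mul_choose_sub_eq_sum_two_pow (-b) (y + k - 1) k)
  simp only [mul_sum] at key
  convert key using 1 <;> refine sum_congr rfl fun j hj => ?_ <;>
    have hjk := Nat.lt_succ_iff.mp (mem_range.mp hj) <;>
    rw [← Nat.choose_mul_factorial_mul_factorial hjk, poch_eq_factorial_mul_choose _ (k - j),
      Nat.cast_sub hjk]
  · rw [show y + (k - j : ℝ) - 1 = y + k - 1 - j by ring]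
    push_cast
    linear_combination (k.choose j * (k - j)! * Ring.choose (y + k - 1 - j) (k - j) : ℝ) *
      neg_one_pow_mul_poch b j
  · rw [show (-2 : ℝ) ^ j = (-1) ^ j * 2 ^ j by rw [← mul_pow]; norm_num,
      show y + b + j + (k - j : ℝ) - 1 = y + k - 1 - -b by ring]
    push_cast
    linear_combination
      (2 ^ j * k.choose j * (k - j)! * Ring.choose (y + k - 1 - -b) (k - j) : ℝ) *
        neg_one_pow_mul_poch b j

theorem sum_neg_one_pow_mul_poch_mul_poch_div_poch {b y : ℝ} (hyb : 0 < y + b) (k : ℕ) :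
    (∑ j ∈ range (k + 1), (-1) ^ j * k.choose j * poch b j * poch y (k - j)) / poch (y + b) k =
      ∑ i ∈ range (k + 1), (-2) ^ i * k.choose i * poch b i / poch (y + b) i := by
  rw [sum_neg_one_pow_mul_poch_mul_poch, sum_div]
  refine sum_congr rfl fun i hi => ?_
  have hik := Nat.lt_succ_iff.mp (mem_range.mp hi)
  rw [← Nat.add_sub_cancel' hik, poch_add, Nat.add_sub_cancel_left]
  have := poch_pos hyb i
  have := poch_pos (add_pos_of_pos_of_nonneg hyb i.cast_nonneg) (k - i)
  field_simp

theorem sum_neg_one_pow_mul_poch_div_poch_eq_sum_choose {m n k : ℕ} (hm : 1 ≤ m)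
    (hkn : k ≤ n) :
    (∑ j ∈ range (k + 1), (-1 : ℝ) ^ j * k.choose j * poch ((n : ℝ) - k + 1) j *
        poch ((m : ℝ) + k - 1) (k - j)) / poch ((m : ℝ) + n) k =
      ∑ i ∈ range (n + 1), (-2 : ℝ) ^ i * (k.choose i * (n - k + i).choose i : ℕ) /
        (n + m - 1 + i).choose i := by
  have hb : (n - k + 1 : ℝ) = (n - k : ℕ) + 1 := by push_cast [Nat.cast_sub hkn]; ring
  have hyb : (m + k - 1 : ℝ) + (n - k + 1) = m + n := by ring
  have hmn : (m + n : ℝ) = (n + m - 1 : ℕ) + 1 := by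
    push_cast [Nat.cast_sub (by omega : 1 ≤ n + m)]; ring
  rw [← hyb, sum_neg_one_pow_mul_poch_mul_poch_div_poch (by rw [hyb]; positivity), hyb, hb,
    ← sum_range_add_sum_Ico _ (by omega : k + 1 ≤ n + 1),
    sum_eq_zero (s := Ico _ _) fun i hi => by rw [choose_eq_zero_of_lt (mem_Ico.mp hi).1]; simp,
    add_zero]
  refine sum_congr rfl fun i _ => ?_
  rw [hmn, poch_natCast_add_one, poch_natCast_add_one]
  field_simp
  push_cast
  ring

/-- Resummation of the closed form of the normalized average
outcome-collision probability. -/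
theorem stmt5 (m n : ℕ) (hm : 1 ≤ m) :
    ∑ k ∈ Finset.range (n + 1),
      (∑ j ∈ Finset.range (k + 1),
          (-1 : ℝ) ^ j * (k.choose j : ℝ) * poch ((n : ℝ) - k + 1) j *
            poch ((m : ℝ) + k - 1) (k - j)) / poch ((m : ℝ) + n) k
      = ∑ j ∈ Finset.range (n + 1),
          (-2 : ℝ) ^ j * ((n + j + 1).choose (2 * j + 1) : ℝ) /
            ((n + m - 1 + j).choose j : ℝ) := by
  rw [sum_congr rfl fun k hk => sum_neg_one_pow_mul_poch_div_poch_eq_sum_choose hm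
    (Nat.lt_succ_iff.mp (mem_range.mp hk)), sum_comm]
  refine sum_congr rfl fun i _ => ?_
  rw [← sum_div, ← mul_sum, ← Nat.cast_sum, sum_range_choose_mul_choose_sub_add]
end

section
/- Fix integers m, n ≥ 0 with m + n ≥ 2. Then Σ_{j=0}^{n} (−2)^j · C(n+j+1, 2j+1) / C(n+m−1+j, j) = (n+m−1) · ∫_0^{π/2} cos(θ)^{n+m−2} · sin((n+1)θ) dθ. -/
/-!
Writing `K = n + m - 2`, the polynomial `∑ⱼ (-2)^j C(n+j+1, 2j+1) (1 - x)^j` is the Chebyshev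
polynomial `Uₙ(x)` (both satisfy the three-term recurrence), so `sin ((n+1)θ) = sin θ · Uₙ(cos θ)`.
The substitution `u = cos θ` turns the integral into `∑ⱼ cⱼ ∫₀¹ u^K (1-u)^j du`, a sum of Beta
integrals `B(K+1, j+1) = K! j! / (K+j+1)!`, and `(K+1) B(K+1, j+1) = 1 / C(K+1+j, j)`.
-/

open Finset Real Polynomial Polynomial.Chebyshev
open scoped Nat

theorem integral_sin_mul_comp_cos {g : ℝ → ℝ} (hg : Continuous g) :
    ∫ θ in (0:ℝ)..π / 2, sin θ * g (cos θ) = ∫ u in (0:ℝ)..1, g u := by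
  have h := intervalIntegral.integral_comp_mul_deriv (a := π / 2) (b := 0)
    (fun θ _ => hasDerivAt_cos θ) (by fun_prop) hg
  simp only [cos_zero, cos_pi_div_two, mul_neg, intervalIntegral.integral_neg] at h
  rw [intervalIntegral.integral_symm, neg_neg] at h
  simpa only [mul_comm, Function.comp_apply] using h

theorem integral_pow_mul_one_sub_pow (K j : ℕ) :
    ∫ u in (0:ℝ)..1, u ^ K * (1 - u) ^ j = (K ! * j ! : ℝ) / (K + j + 1)! := by
  have hB := Complex.betaIntegral_eq_Gamma_mul_div (K + 1) (j + 1)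
    (by simp; positivity) (by simp; positivity)
  rw [show (K + 1 + (j + 1) : ℂ) = ↑(K + j + 1) + 1 by push_cast; ring,
    Complex.Gamma_nat_eq_factorial, Complex.Gamma_nat_eq_factorial,
    Complex.Gamma_nat_eq_factorial, Complex.betaIntegral] at hB
  simp only [add_sub_cancel_right, Complex.cpow_natCast] at hB
  have hC : ((∫ u in (0:ℝ)..1, u ^ K * (1 - u) ^ j : ℝ) : ℂ) =
      ((K ! * j ! / (K + j + 1)! : ℝ) : ℂ) := by
    rw [← intervalIntegral.integral_ofReal]
    push_cast
    exact hB
  exact_mod_cast hC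

theorem succ_mul_integral_pow_mul_one_sub_pow (K j : ℕ) :
    (K + 1) * ∫ u in (0:ℝ)..1, u ^ K * (1 - u) ^ j = (((K + 1 + j).choose j : ℕ) : ℝ)⁻¹ := by
  have h := Nat.add_choose_mul_factorial_mul_factorial (K + 1) j
  rw [integral_pow_mul_one_sub_pow, add_right_comm K j, ← h, Nat.factorial_succ]
  push_cast
  have : ((K + 1 + j).choose j : ℝ) ≠ 0 := by exact_mod_cast (Nat.choose_pos (by omega)).ne'
  field_simp

lemma choose_add_two_add_choose (a t : ℕ) :
    (a + 2).choose (t + 2) + a.choose (t + 2) = 2 * (a + 1).choose (t + 2) + a.choose t := by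
  have h₁ : (a + 2).choose (t + 2) = (a + 1).choose (t + 1) + (a + 1).choose (t + 2) :=
    Nat.choose_succ_succ' _ _
  have h₂ : (a + 1).choose (t + 1) = a.choose t + a.choose (t + 1) := Nat.choose_succ_succ' _ _
  have h₃ : (a + 1).choose (t + 2) = a.choose (t + 1) + a.choose (t + 2) :=
    Nat.choose_succ_succ' _ _
  omega

def chebyshevUCoeff (n j : ℕ) : ℤ := (-2) ^ j * (n + j + 1).choose (2 * j + 1)

lemma chebyshevUCoeff_zero_right (n : ℕ) : chebyshevUCoeff n 0 = n + 1 := by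
  simp [chebyshevUCoeff]

lemma chebyshevUCoeff_eq_zero_of_lt {n j : ℕ} (h : n < j) : chebyshevUCoeff n j = 0 := by
  simp [chebyshevUCoeff, Nat.choose_eq_zero_of_lt (by omega : n + j + 1 < 2 * j + 1)]

lemma chebyshevUCoeff_add_two_succ (n j : ℕ) :
    chebyshevUCoeff (n + 2) (j + 1) =
      2 * chebyshevUCoeff (n + 1) (j + 1) - 2 * chebyshevUCoeff (n + 1) j
        - chebyshevUCoeff n (j + 1) := by
  have h := choose_add_two_add_choose (n + j + 2) (2 * j + 1)
  simp only [chebyshevUCoeff]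
  rw [show n + 2 + (j + 1) + 1 = n + j + 2 + 2 by ring,
    show n + 1 + (j + 1) + 1 = n + j + 2 + 1 by ring, show n + (j + 1) + 1 = n + j + 2 by ring,
    show n + 1 + j + 1 = n + j + 2 by ring, show 2 * (j + 1) + 1 = 2 * j + 1 + 2 by ring]
  have hℤ : ((n + j + 2 + 2).choose (2 * j + 1 + 2) : ℤ) + (n + j + 2).choose (2 * j + 1 + 2) =
      2 * (n + j + 2 + 1).choose (2 * j + 1 + 2) + (n + j + 2).choose (2 * j + 1) := by
    exact_mod_cast h
  linear_combination (-2 : ℤ) ^ (j + 1) * hℤ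

section

variable {A : Type*} [CommRing A] (y : A)

lemma sum_chebyshevUCoeff_range_of_le {n N : ℕ} (h : n + 1 ≤ N) :
    ∑ j ∈ range N, (chebyshevUCoeff n j : A) * y ^ j =
      ∑ j ∈ range (n + 1), (chebyshevUCoeff n j : A) * y ^ j := by
  refine (sum_subset (range_subset_range.2 h) fun j _ hj => ?_).symm
  rw [chebyshevUCoeff_eq_zero_of_lt (by simpa using hj), Int.cast_zero, zero_mul]

lemma sum_chebyshevUCoeff_add_two (n : ℕ) :
    ∑ j ∈ range (n + 3), (chebyshevUCoeff (n + 2) j : A) * y ^ j =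
      2 * (1 - y) * ∑ j ∈ range (n + 2), (chebyshevUCoeff (n + 1) j : A) * y ^ j -
        ∑ j ∈ range (n + 1), (chebyshevUCoeff n j : A) * y ^ j := by
  have shift : ∀ k, ∑ j ∈ range (n + 3), (chebyshevUCoeff k j : A) * y ^ j =
      ∑ j ∈ range (n + 2), (chebyshevUCoeff k (j + 1) : A) * y ^ (j + 1) + (k + 1) := by
    intro k
    rw [sum_range_succ', chebyshevUCoeff_zero_right]
    push_cast
    ring
  have termwise : ∑ j ∈ range (n + 2), (chebyshevUCoeff (n + 2) (j + 1) : A) * y ^ (j + 1) =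
      2 * ∑ j ∈ range (n + 2), (chebyshevUCoeff (n + 1) (j + 1) : A) * y ^ (j + 1) -
        2 * y * ∑ j ∈ range (n + 2), (chebyshevUCoeff (n + 1) j : A) * y ^ j -
          ∑ j ∈ range (n + 2), (chebyshevUCoeff n (j + 1) : A) * y ^ (j + 1) := by
    simp only [mul_sum, ← sum_sub_distrib]
    refine sum_congr rfl fun j _ => ?_
    rw [chebyshevUCoeff_add_two_succ]
    push_cast
    ring
  rw [← sum_chebyshevUCoeff_range_of_le y (n := n + 2) (N := n + 3) le_rfl,
    ← sum_chebyshevUCoeff_range_of_le y (n := n) (N := n + 3) (by omega), shift, shift, termwise,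
    ← sum_chebyshevUCoeff_range_of_le y (n := n + 1) (N := n + 3) (by omega), shift]
  push_cast
  ring

end

theorem Polynomial.Chebyshev.U_eq_sum_chebyshevUCoeff (R : Type*) [CommRing R] (n : ℕ) :
    U R n = ∑ j ∈ range (n + 1), (chebyshevUCoeff n j : R[X]) * (1 - X) ^ j := by
  induction n using Nat.twoStepInduction with
  | zero => simp [chebyshevUCoeff]
  | one =>
    have h₁ : chebyshevUCoeff 1 1 = -2 := by norm_num [chebyshevUCoeff]
    rw [sum_range_succ, sum_range_one, chebyshevUCoeff_zero_right, h₁]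
    push_cast
    rw [U_one]
    ring
  | more n ih₀ ih₁ =>
    rw [sum_chebyshevUCoeff_add_two, ← ih₀, ← ih₁, sub_sub_cancel]
    push_cast
    rw [U_add_two]

theorem sum_chebyshevUCoeff_div_choose_eq_integral (K n : ℕ) :
    ∑ j ∈ range (n + 1), (chebyshevUCoeff n j : ℝ) / (K + 1 + j).choose j =
      (K + 1) * ∫ θ in (0:ℝ)..π / 2, cos θ ^ K * sin ((n + 1) * θ) := by
  have hU : ∀ θ, cos θ ^ K * sin ((n + 1) * θ) = sin θ * (cos θ ^ K * (U ℝ n).eval (cos θ)) := by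
    intro θ
    rw [← Int.cast_natCast n, ← U_real_cos]
    ring
  have hU_sum : ∀ u : ℝ, u ^ K * (U ℝ n).eval u =
      ∑ j ∈ range (n + 1), (chebyshevUCoeff n j : ℝ) * (u ^ K * (1 - u) ^ j) := by
    intro u
    simp only [U_eq_sum_chebyshevUCoeff, eval_finsetSum, eval_mul, eval_pow, eval_sub, eval_one,
      eval_X, eval_intCast, mul_sum]
    exact sum_congr rfl fun j _ => by ring
  simp_rw [hU, integral_sin_mul_comp_cos (g := fun u => u ^ K * (U ℝ n).eval u) (by fun_prop),
    hU_sum]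
  rw [intervalIntegral.integral_finsetSum
      (fun j _ => by apply Continuous.intervalIntegrable; fun_prop), mul_sum]
  refine sum_congr rfl fun j _ => ?_
  rw [intervalIntegral.integral_const_mul, mul_left_comm, succ_mul_integral_pow_mul_one_sub_pow,
    div_eq_mul_inv]

/-- Integral representation of the normalized average
outcome-collision probability `P₂(m,n)` of an `n`-photon, `m`-mode Fock boson sampler. -/
theorem stmt6 (m n : ℕ) (h : 2 ≤ m + n) :
    ∑ j ∈ Finset.range (n + 1),
        (-2 : ℝ) ^ j * ((n + j + 1).choose (2 * j + 1) : ℝ) /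
          ((n + m - 1 + j).choose j : ℝ)
      = ((n : ℝ) + m - 1) *
          ∫ θ in (0:ℝ)..(Real.pi / 2),
            Real.cos θ ^ (n + m - 2) * Real.sin ((n + 1) * θ) := by
  obtain ⟨K, hK⟩ := Nat.exists_eq_add_of_le h
  have hK_real : (n : ℝ) + m - 1 = K + 1 := by
    have : (n : ℝ) + m = K + 2 := by exact_mod_cast (by omega : n + m = K + 2)
    linarith
  rw [show n + m - 2 = K by omega, show n + m - 1 = K + 1 by omega, hK_real,
    ← sum_chebyshevUCoeff_div_choose_eq_integral]
  simp [chebyshevUCoeff]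
end

section
/- (Recursive structure of the photon-number-preserving operator space.) Fix integers m ≥ 1 and k ≥ 1. The k-photon operator space decomposes as a direct sum End(P_k) = ker(L_k) ⊕ range(R_k); that is, the kernel of the restricted lowering map and the range of the restricted raising map are complementary linear subspaces of End(P_k) (their intersection is {0} and their sum is all of End(P_k)). -/
open MvPolynomial

noncomputable section

/-- The `k`-photon sector `P_k`: homogeneous polynomials of degree `k` in `m` variables
(the Bargmann realization of the `m`-mode bosonic Fock space). -/
abbrev P (m k : ℕ) : Submodule ℂ (MvPolynomial (Fin m) ℂ) :=
  homogeneousSubmodule (Fin m) ℂ k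

lemma mulX_mem {m d : ℕ} (s : Fin m) {p : MvPolynomial (Fin m) ℂ} (hp : p ∈ P m d) :
    MvPolynomial.X s * p ∈ P m (d + 1) := by
  rw [mem_homogeneousSubmodule] at hp ⊢
  have := (isHomogeneous_X ℂ s).mul hp
  rwa [Nat.add_comm] at this

lemma degree_single_one {m : ℕ} (s : Fin m) : (Finsupp.single s 1).degree = 1 := by
  rw [Finsupp.degree_apply, Finsupp.support_single_ne_zero _ one_ne_zero, Finset.sum_singleton,
    Finsupp.single_eq_same]

lemma pderiv_mem {m d : ℕ} (s : Fin m) {p : MvPolynomial (Fin m) ℂ}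
    (hp : p ∈ P m (d + 1)) : MvPolynomial.pderiv s p ∈ P m d := by
  rw [mem_homogeneousSubmodule] at hp
  rw [as_sum p, map_sum]
  apply Submodule.sum_mem
  intro u hu
  rw [pderiv_monomial]
  by_cases h : u s = 0
  · simp [h]
  · rw [mem_homogeneousSubmodule]
    apply isHomogeneous_monomial
    have hle : Finsupp.single s 1 ≤ u :=
      Finsupp.single_le_iff.mpr (Nat.one_le_iff_ne_zero.mpr h)
    have hsum : (u - Finsupp.single s 1) + Finsupp.single s 1 = u :=
      tsub_add_cancel_of_le hle
    have hdeg : u.degree = d + 1 := by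
      have hc : coeff u p ≠ 0 := (mem_support_iff).mp hu
      have := hp hc
      rwa [Finsupp.degree_eq_weight_one]
    have hadd : (u - Finsupp.single s 1).degree + (Finsupp.single s 1).degree = u.degree := by
      simp_rw [Finsupp.degree_eq_weight_one]
      rw [← map_add, hsum]
    rw [degree_single_one] at hadd
    omega

/-- Multiplication by `x_s` as a linear map `P_d → P_{d+1}`. -/
def xRes (m d : ℕ) (s : Fin m) : P m d →ₗ[ℂ] P m (d + 1) :=
  (LinearMap.mulLeft ℂ (MvPolynomial.X s)).restrict fun _q hq => mulX_mem s hq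

/-- The partial derivative `∂_s` as a linear map `P_{d+1} → P_d`. -/
def dRes (m d : ℕ) (s : Fin m) : P m (d + 1) →ₗ[ℂ] P m d :=
  (MvPolynomial.pderiv s).toLinearMap.restrict fun _q hq => pderiv_mem s hq

/-- The restricted lowering map `L_{d+1} : End(P_{d+1}) → End(P_d)`,
`T ↦ Σ_s ∂_s ∘ T ∘ x_s`. -/
def Lres (m d : ℕ) :
    Module.End ℂ (P m (d + 1)) →ₗ[ℂ] Module.End ℂ (P m d) where
  toFun T := ∑ s, dRes m d s ∘ₗ T ∘ₗ xRes m d s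
  map_add' T T' := by
    rw [← Finset.sum_add_distrib]
    exact Finset.sum_congr rfl fun s _ => by
      rw [LinearMap.add_comp, LinearMap.comp_add]
  map_smul' c T := by
    simp [Finset.smul_sum, LinearMap.smul_comp, LinearMap.comp_smul]

/-- The restricted raising map `R_{d+1} : End(P_d) → End(P_{d+1})`,
`T ↦ Σ_s x_s ∘ T ∘ ∂_s`. -/
def Rres (m d : ℕ) :
    Module.End ℂ (P m d) →ₗ[ℂ] Module.End ℂ (P m (d + 1)) where
  toFun T := ∑ s, xRes m d s ∘ₗ T ∘ₗ dRes m d s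
  map_add' T T' := by
    rw [← Finset.sum_add_distrib]
    exact Finset.sum_congr rfl fun s _ => by
      rw [LinearMap.add_comp, LinearMap.comp_add]
  map_smul' c T := by
    simp [Finset.smul_sum, LinearMap.smul_comp, LinearMap.comp_smul]

end

/-!
With `k = d + 1`, the relations `∂_s x_t = x_t ∂_s + δ_{st}` and Euler's identity
`∑_s x_s ∂_s = k` on `P_k` give `L_{k+1} R_{k+1} = R_k L_k + (2k + m)` on `End(P_k)`, while
`L_1 R_1 = m` on `End(P_0)`. For `c ≠ 0`, `LR + c` is invertible as soon as `RL + c` is, so by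
induction `L_k R_k + n` is invertible for every `n : ℕ`; in particular `L_k R_k` is. Then
`R_k (L_k R_k)⁻¹ L_k` is a projection with kernel `ker L_k` and range `range R_k`.
-/

section Complement

variable {K M N : Type*} [Semiring K] [AddCommGroup M] [Module K M] [AddCommGroup N]
  [Module K N] (L : N →ₗ[K] M) (R : M →ₗ[K] N)

theorem LinearMap.isCompl_ker_range_of_bijective_comp (h : Function.Bijective (L ∘ₗ R)) :
    IsCompl (LinearMap.ker L) (LinearMap.range R) := by
  constructor
  · rw [Submodule.disjoint_def]
    rintro _ hker ⟨y, rfl⟩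
    rw [h.1 (hker.trans (map_zero (L ∘ₗ R)).symm), map_zero]
  · rw [codisjoint_iff, eq_top_iff]
    intro x _
    obtain ⟨y, hy⟩ := h.2 (L x)
    refine Submodule.mem_sup.2 ⟨x - R y, ?_, R y, ⟨y, rfl⟩, sub_add_cancel x (R y)⟩
    simp_all [LinearMap.mem_ker, map_sub]

end Complement

section Jacobson

variable {K M N : Type*} [CommRing K] [AddCommGroup M] [Module K M] [AddCommGroup N]
  [Module K N] (L : N →ₗ[K] M) (R : M →ₗ[K] N)

theorem LinearMap.bijective_comp_add_smul_one_swap {c : K} (hc : IsUnit c)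
    (h : Function.Bijective (L ∘ₗ R + c • (1 : Module.End K M))) :
    Function.Bijective (R ∘ₗ L + c • (1 : Module.End K N)) := by
  obtain ⟨u, rfl⟩ := hc
  constructor
  · intro x y hxy
    have hL : L x = L y := h.1 <| by
      simpa [map_add, map_smul] using congrArg L hxy
    exact u.isUnit.smul_left_cancel.mp (by simpa [hL] using hxy)
  · intro y
    obtain ⟨z, hz⟩ := h.2 (L y)
    refine ⟨(↑u⁻¹ : K) • (y - R z), ?_⟩
    simp only [LinearMap.add_apply, LinearMap.comp_apply, LinearMap.smul_apply,
      Module.End.one_apply] at hz ⊢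
    rw [map_smul, map_smul, map_sub L, ← hz, add_sub_cancel_left, map_smul, smul_smul, smul_smul,
      Units.inv_mul, Units.mul_inv, one_smul, one_smul, add_sub_cancel]

end Jacobson

section PhotonOperators

variable {m : ℕ}

@[simp] lemma coe_xRes (d : ℕ) (s : Fin m) (p : P m d) :
    (xRes m d s p : MvPolynomial (Fin m) ℂ) = X s * (p : MvPolynomial (Fin m) ℂ) := rfl

@[simp] lemma coe_dRes (d : ℕ) (s : Fin m) (p : P m (d + 1)) :
    (dRes m d s p : MvPolynomial (Fin m) ℂ) = pderiv s (p : MvPolynomial (Fin m) ℂ) := rfl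

lemma Lres_apply (d : ℕ) (T : Module.End ℂ (P m (d + 1))) :
    Lres m d T = ∑ s, dRes m d s ∘ₗ T ∘ₗ xRes m d s := rfl

lemma Rres_apply (d : ℕ) (T : Module.End ℂ (P m d)) :
    Rres m d T = ∑ s, xRes m d s ∘ₗ T ∘ₗ dRes m d s := rfl

lemma pderiv_eq_zero_of_mem_P_zero (s : Fin m) {p : MvPolynomial (Fin m) ℂ} (hp : p ∈ P m 0) :
    pderiv s p = 0 := by
  rw [P, homogeneousSubmodule_zero, Submodule.mem_one] at hp
  obtain ⟨r, rfl⟩ := hp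
  exact pderiv_C

lemma dRes_comp_xRes_zero (s t : Fin m) :
    dRes m 0 s ∘ₗ xRes m 0 t = if s = t then 1 else 0 := by
  ext1 p
  apply Subtype.ext
  have hp := pderiv_eq_zero_of_mem_P_zero s p.2
  by_cases h : s = t
  · subst h; simp [hp]
  · simp [hp, h, pderiv_X_of_ne (Ne.symm h)]

lemma dRes_comp_xRes_succ (d : ℕ) (s t : Fin m) :
    dRes m (d + 1) s ∘ₗ xRes m (d + 1) t
      = xRes m d t ∘ₗ dRes m d s + if s = t then 1 else 0 := by
  ext1 p
  apply Subtype.ext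
  by_cases h : s = t
  · subst h; simp [add_comm]
  · simp [h, pderiv_X_of_ne (Ne.symm h)]

lemma sum_xRes_comp_dRes (d : ℕ) :
    ∑ s, xRes m d s ∘ₗ dRes m d s = ((d + 1 : ℕ) : ℂ) • (1 : Module.End ℂ (P m (d + 1))) := by
  ext1 p
  apply Subtype.ext
  simp only [LinearMap.sum_apply, LinearMap.comp_apply, Submodule.coe_sum, coe_xRes, coe_dRes,
    LinearMap.smul_apply, Module.End.one_apply, Nat.cast_smul_eq_nsmul]
  exact ((mem_homogeneousSubmodule _ _).1 p.2).sum_X_mul_pderiv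

lemma Lres_comp_Rres_zero :
    Lres m 0 ∘ₗ Rres m 0 = (m : ℂ) • (1 : Module.End ℂ (Module.End ℂ (P m 0))) := by
  ext1 T
  have term (s t : Fin m) :
      dRes m 0 s ∘ₗ (xRes m 0 t ∘ₗ T ∘ₗ dRes m 0 t) ∘ₗ xRes m 0 s = if t = s then T else 0 := by
    calc _ = (dRes m 0 s ∘ₗ xRes m 0 t) ∘ₗ T ∘ₗ (dRes m 0 t ∘ₗ xRes m 0 s) := by
          simp only [LinearMap.comp_assoc]
      _ = _ := by
          rw [dRes_comp_xRes_zero, dRes_comp_xRes_zero]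
          by_cases h : t = s
          · subst h
            simp only [if_true, Module.End.one_eq_id, LinearMap.comp_id, LinearMap.id_comp]
          · simp only [h, Ne.symm h, if_false, LinearMap.zero_comp]
  simp only [LinearMap.comp_apply, Rres_apply, map_sum, Lres_apply, term, Finset.sum_ite_eq,
    Finset.mem_univ, if_true, Finset.sum_const, Finset.card_univ, Fintype.card_fin,
    LinearMap.smul_apply, Module.End.one_apply, Nat.cast_smul_eq_nsmul]

lemma Lres_comp_Rres_succ (d : ℕ) :
    Lres m (d + 1) ∘ₗ Rres m (d + 1) = Rres m d ∘ₗ Lres m d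
      + ((2 * d + 2 + m : ℕ) : ℂ) • (1 : Module.End ℂ (Module.End ℂ (P m (d + 1)))) := by
  ext1 T
  set E : Module.End ℂ (P m (d + 1)) := ∑ s, xRes m d s ∘ₗ dRes m d s with hE
  have term (s t : Fin m) :
      dRes m (d + 1) s ∘ₗ (xRes m (d + 1) t ∘ₗ T ∘ₗ dRes m (d + 1) t) ∘ₗ xRes m (d + 1) s
        = xRes m d t ∘ₗ (dRes m d s ∘ₗ T ∘ₗ xRes m d s) ∘ₗ dRes m d t
          + if t = s then (xRes m d s ∘ₗ dRes m d s) * T + T * (xRes m d s ∘ₗ dRes m d s) + T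
            else 0 := by
    calc _ = (dRes m (d + 1) s ∘ₗ xRes m (d + 1) t) ∘ₗ T
          ∘ₗ (dRes m (d + 1) t ∘ₗ xRes m (d + 1) s) := by
          simp only [LinearMap.comp_assoc]
      _ = _ := by
          rw [dRes_comp_xRes_succ, dRes_comp_xRes_succ]
          by_cases h : t = s
          · subst h
            simp only [if_true, LinearMap.add_comp, LinearMap.comp_add, Module.End.one_eq_id,
              LinearMap.comp_id, LinearMap.id_comp, Module.End.mul_eq_comp, LinearMap.comp_assoc]
            abel
          · simp only [h, Ne.symm h, if_false, add_zero, LinearMap.comp_assoc]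
  calc Lres m (d + 1) (Rres m (d + 1) T)
      = ∑ t, ∑ s, dRes m (d + 1) s ∘ₗ (xRes m (d + 1) t ∘ₗ T ∘ₗ dRes m (d + 1) t)
          ∘ₗ xRes m (d + 1) s := by
        simp only [Rres_apply, map_sum, Lres_apply]
    _ = ∑ s, Rres m d (dRes m d s ∘ₗ T ∘ₗ xRes m d s) + (E * T + T * E + (m : ℂ) • T) := by
        simp only [term, Finset.sum_add_distrib, Finset.sum_ite_eq, Finset.mem_univ, if_true,
          Rres_apply, hE, Finset.sum_mul, Finset.mul_sum, Finset.sum_const, Finset.card_univ,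
          Fintype.card_fin, Nat.cast_smul_eq_nsmul]
        rw [Finset.sum_comm]
    _ = _ := by
        rw [← map_sum, ← Lres_apply, hE, sum_xRes_comp_dRes]
        simp only [LinearMap.add_apply, LinearMap.comp_apply, LinearMap.smul_apply,
          Module.End.one_apply, smul_mul_assoc, mul_smul_comm, one_mul, mul_one]
        push_cast
        module

lemma bijective_Lres_comp_Rres_add_smul_one (hm : m ≠ 0) (d n : ℕ) :
    Function.Bijective
      (Lres m d ∘ₗ Rres m d + (n : ℂ) • (1 : Module.End ℂ (Module.End ℂ (P m d)))) := by
  induction d generalizing n with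
  | zero =>
    rw [Lres_comp_Rres_zero, ← add_smul, ← Nat.cast_add]
    exact (LinearEquiv.smulOfNeZero ℂ (Module.End ℂ (P m 0)) _
      (Nat.cast_ne_zero.2 (by omega))).bijective
  | succ d ih =>
    rw [Lres_comp_Rres_succ, add_assoc, ← add_smul, ← Nat.cast_add]
    have hc : IsUnit ((2 * d + 2 + m + n : ℕ) : ℂ) :=
      isUnit_iff_ne_zero.2 (Nat.cast_ne_zero.2 (by omega))
    have hswap := LinearMap.bijective_comp_add_smul_one_swap
      (M := Module.End ℂ (P m d)) (N := Module.End ℂ (P m (d + 1))) (Lres m d) (Rres m d) hc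
      (ih (2 * d + 2 + m + n))
    exact hswap

end PhotonOperators

/-- Recursive structure of the photon-number-preserving operator
space. For `m ≥ 1` and `k ≥ 1` (here `k = j + 1`), the `k`-photon operator space
decomposes as `End(P_k) = ker(L_k) ⊕ range(R_k)`: the kernel of the restricted lowering
map and the range of the restricted raising map intersect trivially and span all of
`End(P_k)`. -/
theorem stmt17 (m j : ℕ) (hm : 1 ≤ m) :
    LinearMap.ker (Lres m j) ⊓ LinearMap.range (Rres m j) = ⊥ ∧
      LinearMap.ker (Lres m j) ⊔ LinearMap.range (Rres m j) = ⊤ := by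
  have hLR : Function.Bijective (Lres m j ∘ₗ Rres m j) := by
    simpa using bijective_Lres_comp_Rres_add_smul_one (by omega) j 0
  have hcompl := LinearMap.isCompl_ker_range_of_bijective_comp
    (M := Module.End ℂ (P m j)) (N := Module.End ℂ (P m (j + 1))) (Lres m j) (Rres m j) hLR
  exact ⟨hcompl.inf_eq_bot, hcompl.sup_eq_top⟩
end
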